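/- For N = 1, the function φ(x) = exp(-x²/8)/(1 + x⁴) belongs to the weighted Sobolev space X (i.e. ∫_ℝ |φ'(x)|² e^{x²/4} dx < ∞), and there exists no real number r such that φ(x) ≤ r·exp(-x²/4) for almost every x ∈ ℝ. -/

import Mathlib

/-! The weight `e^{x²/4}` exactly cancels the square of the Gaussian factor `e^{-x²/8}` of `φ'`,
leaving a rational function of size `O(1/(1 + x²))`, which is integrable. On the other hand
`φ / e^{-x²/4} = e^{x²/8}/(1 + x⁴)` tends to infinity, so `φ ≤ r e^{-x²/4}` fails on a whole
half-line, which has positive measure. -/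

open MeasureTheory

noncomputable section

/-- The function `φ(x) = exp(-x²/8)/(1 + x⁴)`. -/
def phi (x : ℝ) : ℝ := Real.exp (-x ^ 2 / 8) / (1 + x ^ 4)

open Filter Real

theorem not_ae_le_of_tendsto_atTop {α β : Type*} [LinearOrder α] [TopologicalSpace α]
    [OrderTopology α] [Nonempty α] [NoMaxOrder α] [MeasurableSpace α] {μ : Measure α}
    [μ.IsOpenPosMeasure] [Preorder β] [NoMaxOrder β] {f : α → β} (hf : Tendsto f atTop atTop) (r : β) :
    ¬∀ᵐ x ∂μ, f x ≤ r := by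
  intro h
  obtain ⟨a, ha⟩ := eventually_atTop.1 (hf.eventually_gt_atTop r)
  have hnull : μ (Set.Ioi a) = 0 :=
    measure_mono_null (fun x hx => not_le_of_gt (ha x hx.le)) (ae_iff.1 h)
  exact isOpen_Ioi.measure_ne_zero μ Set.nonempty_Ioi hnull

theorem tendsto_exp_sq_div_one_add_pow_four_atTop :
    Tendsto (fun x : ℝ => exp (x ^ 2 / 8) / (1 + x ^ 4)) atTop atTop := by
  have hsq : Tendsto (fun x : ℝ => x ^ 2 / 8) atTop atTop :=
    (tendsto_pow_atTop two_ne_zero).atTop_div_const (by norm_num)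
  have hlow : Tendsto (fun x : ℝ => 128⁻¹ * (exp (x ^ 2 / 8) / (x ^ 2 / 8) ^ 2)) atTop atTop :=
    ((tendsto_exp_div_pow_atTop 2).comp hsq).const_mul_atTop (by norm_num)
  refine tendsto_atTop_mono' atTop ?_ hlow
  filter_upwards [eventually_ge_atTop 1] with x hx
  have hx4 : 1 ≤ x ^ 4 := one_le_pow₀ hx
  rw [← div_eq_inv_mul, div_div]
  gcongr
  nlinarith

theorem phi_div_exp (x : ℝ) : phi x / exp (-x ^ 2 / 4) = exp (x ^ 2 / 8) / (1 + x ^ 4) := by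
  rw [phi, div_right_comm, ← exp_sub]
  ring_nf

theorem hasDerivAt_phi (x : ℝ) : HasDerivAt phi
    (exp (-x ^ 2 / 8) * (-(x / 4) * (1 + x ^ 4) - 4 * x ^ 3) / (1 + x ^ 4) ^ 2) x := by
  have hnum : HasDerivAt (fun y : ℝ => exp (-y ^ 2 / 8)) (exp (-x ^ 2 / 8) * (-(x / 4))) x := by
    have hexponent : HasDerivAt (fun y : ℝ => -y ^ 2 / 8) (-(x / 4)) x :=
      ((hasDerivAt_pow 2 x).neg.div_const 8).congr_deriv (by push_cast; ring)
    exact hexponent.exp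
  have hden : HasDerivAt (fun y : ℝ => 1 + y ^ 4) (4 * x ^ 3) x := by
    simpa using (hasDerivAt_pow 4 x).const_add 1
  exact (hnum.div hden (by positivity)).congr_deriv (by ring)

theorem deriv_phi_sq_mul_exp (x : ℝ) :
    deriv phi x ^ 2 * exp (x ^ 2 / 4) = (x / 4 * (1 + x ^ 4) + 4 * x ^ 3) ^ 2 / (1 + x ^ 4) ^ 4 := by
  have hexp : exp (-x ^ 2 / 8) ^ 2 * exp (x ^ 2 / 4) = 1 := by
    rw [← exp_nat_mul, ← exp_add, exp_eq_one_iff]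
    ring
  rw [(hasDerivAt_phi x).deriv, div_pow, mul_pow, div_mul_eq_mul_div, mul_right_comm, hexp, one_mul]
  ring

theorem deriv_phi_sq_mul_exp_le (x : ℝ) :
    deriv phi x ^ 2 * exp (x ^ 2 / 4) ≤ 11 * (1 + x ^ 2)⁻¹ := by
  rw [deriv_phi_sq_mul_exp]
  set u := 1 + x ^ 4
  have hu1 : 1 ≤ u := le_add_of_nonneg_right (by positivity)
  have hquad : 1 + 16 * x ^ 2 + x ^ 4 ≤ 9 * u := by nlinarith [sq_nonneg (x ^ 2 - 1)]
  have hsq : x ^ 2 * (1 + x ^ 2) ≤ 2 * u := by nlinarith [sq_nonneg (x ^ 2 - 1)]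
  rw [← div_eq_mul_inv, div_le_div_iff₀ (by positivity) (by positivity)]
  calc (x / 4 * u + 4 * x ^ 3) ^ 2 * (1 + x ^ 2)
      = x ^ 2 * (1 + x ^ 2) * (1 + 16 * x ^ 2 + x ^ 4) ^ 2 / 16 := by ring
    _ ≤ 2 * u * (9 * u) ^ 2 / 16 := by gcongr
    _ ≤ 11 * u ^ 3 := by nlinarith [pow_pos (by positivity : (0:ℝ) < u) 3]
    _ ≤ 11 * u ^ 4 := by gcongr; norm_num

theorem integrable_deriv_phi_sq_mul_exp :
    Integrable (fun x : ℝ => deriv phi x ^ 2 * exp (x ^ 2 / 4)) := by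
  refine (integrable_inv_one_add_sq.const_mul 11).mono' ?_ (.of_forall fun x => ?_)
  · exact (((measurable_deriv phi).pow_const 2).mul (by fun_prop)).aestronglyMeasurable
  · rw [Real.norm_of_nonneg (by positivity)]
    exact deriv_phi_sq_mul_exp_le x

/-- For `N = 1`, `φ(x) = exp(-x²/8)/(1+x⁴)` belongs to the weighted Sobolev
space `X`, i.e. `∫ |φ'|² e^{x²/4} dx < ∞`, yet there is no `r ∈ ℝ` with
`φ(x) ≤ r·exp(-x²/4)` for a.e. `x`. -/
theorem no_comparison_with_gaussian :
    Integrable (fun x : ℝ => (deriv phi x) ^ 2 * Real.exp (x ^ 2 / 4)) ∧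
      ¬∃ r : ℝ, ∀ᵐ x : ℝ ∂volume, phi x ≤ r * Real.exp (-x ^ 2 / 4) := by
  refine ⟨integrable_deriv_phi_sq_mul_exp, fun ⟨r, hr⟩ => ?_⟩
  refine not_ae_le_of_tendsto_atTop (μ := volume) tendsto_exp_sq_div_one_add_pow_four_atTop r ?_
  filter_upwards [hr] with x hx
  rwa [← phi_div_exp, div_le_iff₀ (exp_pos _)]
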